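/- arXiv:1508.03359 — 7 statements merged into one kernel-verified Lean document; each statement's English description precedes it below -/
import Mathlib

section
/- Let u, v ∈ ℂⁿ (n ≥ 2), where v has pairwise distinct coordinates, and let 1 ≤ p ≤ ∞. Then for all indices i ≠ j, |uᵢ - vⱼ| ≥ (1 - ‖(u - v)/d(v)‖_p) |vᵢ - vⱼ|, where d(v)ᵢ = min_{j ≠ i} |vᵢ - vⱼ| and (u-v)/d(v) denotes the vector with coordinates |uᵢ - vᵢ|/dᵢ(v). -/
open scoped ENNReal

noncomputable def pnorm (p : ℝ≥0∞) {n : ℕ} (w : Fin n → ℝ) : ℝ :=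
  ‖(WithLp.equiv p (Fin n → ℝ)).symm w‖

noncomputable def dmin {n : ℕ} (v : Fin n → ℂ) (i : Fin n) : ℝ :=
  ⨅ j : {j : Fin n // j ≠ i}, ‖v i - v j.1‖

lemma abs_le_pnorm {p : ℝ≥0∞} (hp : 1 ≤ p) {n : ℕ} (w : Fin n → ℝ) (i : Fin n) :
    |w i| ≤ pnorm p w :=
  have : Fact (1 ≤ p) := ⟨hp⟩
  PiLp.norm_apply_le ((WithLp.equiv p (Fin n → ℝ)).symm w) i

lemma dmin_le_norm_sub {n : ℕ} (v : Fin n → ℂ) {i j : Fin n} (hji : j ≠ i) :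
    dmin v i ≤ ‖v i - v j‖ :=
  ciInf_le (Set.finite_range _).bddBelow (⟨j, hji⟩ : {j : Fin n // j ≠ i})

lemma dmin_pos {n : ℕ} {v : Fin n → ℂ} (hv : Function.Injective v) {i j : Fin n} (hji : j ≠ i) :
    0 < dmin v i := by
  have : Nonempty {j : Fin n // j ≠ i} := ⟨⟨j, hji⟩⟩
  obtain ⟨k, hk⟩ := Finite.exists_min fun k : {k : Fin n // k ≠ i} => ‖v i - v k.1‖
  have hdmin : dmin v i = ‖v i - v k.1‖ := le_antisymm (dmin_le_norm_sub v k.2) (le_ciInf hk)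
  rw [hdmin, norm_pos_iff, sub_ne_zero]
  exact hv.ne k.2.symm

lemma norm_sub_le_pnorm_mul_norm_sub {n : ℕ} (u : Fin n → ℂ) {v : Fin n → ℂ}
    (hv : Function.Injective v) {p : ℝ≥0∞} (hp : 1 ≤ p) {i j : Fin n} (hij : i ≠ j) :
    ‖u i - v i‖ ≤ pnorm p (fun k => ‖u k - v k‖ / dmin v k) * ‖v i - v j‖ := by
  set w : Fin n → ℝ := fun k => ‖u k - v k‖ / dmin v k
  have hd : 0 < dmin v i := dmin_pos hv hij.symm
  have hw : 0 ≤ w i := by positivity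
  have hwP : w i ≤ pnorm p w := (le_abs_self _).trans (abs_le_pnorm hp w i)
  calc ‖u i - v i‖ = w i * dmin v i := (div_mul_cancel₀ _ hd.ne').symm
    _ ≤ pnorm p w * ‖v i - v j‖ :=
      mul_le_mul hwP (dmin_le_norm_sub v hij.symm) hd.le (hw.trans hwP)

theorem u_v_inequality_basic_1_general (n : ℕ) (u v : Fin n → ℂ)
    (hv : Function.Injective v) (p : ℝ≥0∞) (hp : 1 ≤ p) :
    ∀ i j : Fin n, i ≠ j →
      (1 - pnorm p (fun k => ‖u k - v k‖ / dmin v k)) * ‖v i - v j‖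
        ≤ ‖u i - v j‖ := by
  intro i j hij
  calc (1 - pnorm p (fun k => ‖u k - v k‖ / dmin v k)) * ‖v i - v j‖
      = ‖v i - v j‖ - pnorm p (fun k => ‖u k - v k‖ / dmin v k) * ‖v i - v j‖ := by ring
    _ ≤ ‖v i - v j‖ - ‖u i - v i‖ := by
      gcongr; exact norm_sub_le_pnorm_mul_norm_sub u hv hp hij
    _ ≤ ‖u i - v j‖ := by
      linarith [norm_sub_le_norm_sub_add_norm_sub (v i) (u i) (v j), norm_sub_rev (v i) (u i)]

theorem u_v_inequality_basic_1 (n : ℕ) (hn : 2 ≤ n) (u v : Fin n → ℂ)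
    (hv : Function.Injective v) (p : ℝ≥0∞) (hp : 1 ≤ p) :
    ∀ i j : Fin n, i ≠ j →
      (1 - pnorm p (fun k => ‖u k - v k‖ / dmin v k)) * ‖v i - v j‖
        ≤ ‖u i - v j‖ :=
  u_v_inequality_basic_1_general n u v hv p hp
end

section
/- Let a > 0, b ≥ 1, R = 2/(b + 1 + √((b-1)² + 8a)), and define functions φ_N : [0,R] → [0,1] recursively by φ₀(t) = 1 and φ_{N+1}(t) = a t² φ_N(t) / ((1-t)(1-bt) - a t² φ_N(t)). Then for every N ≥ 0, φ_N is well-defined (the denominator is positive on [0,R]), nondecreasing on [0,R], and satisfies φ_N(R) = 1. -/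
noncomputable def phiN (a b : ℝ) : ℕ → ℝ → ℝ
  | 0, _ => 1
  | N+1, t => a * t^2 * phiN a b N t / ((1 - t) * (1 - b*t) - a * t^2 * phiN a b N t)


private lemma phiN_key_st (b s t R : ℝ) (hb : 1 ≤ b) (hs : 0 ≤ s) (hst : s ≤ t)
    (htR : t ≤ R) (hRle : (b+1)*R ≤ 2) :
    s^2 * ((1 - t) * (1 - b*t)) ≤ t^2 * ((1 - s) * (1 - b*s)) := by
  have h1 : (b+1)*t ≤ 2 := by nlinarith [mul_le_mul_of_nonneg_left htR (by linarith : (0:ℝ) ≤ b+1)]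
  have h3 : 0 ≤ t + s - (b+1)*s*t := by nlinarith [mul_le_mul_of_nonneg_left h1 hs]
  nlinarith [mul_nonneg (sub_nonneg.2 hst) h3]

private lemma phiN_aux_mono (x y u v qs qt : ℝ) (hx : 0 ≤ x) (hxy : x ≤ y) (hy : 0 ≤ y)
    (hu : 0 ≤ u) (hqt : 0 ≤ qt) (hk : u*qt ≤ v*qs) :
    u * x * (qt - v*y) ≤ v * y * (qs - u*x) := by
  nlinarith [mul_le_mul_of_nonneg_right hxy (mul_nonneg hu hqt),
    mul_le_mul_of_nonneg_left hk hy]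

theorem phiN_well_defined (a b : ℝ) (ha : 0 < a) (hb : 1 ≤ b)
    (R : ℝ) (hR : R = 2 / (b + 1 + Real.sqrt ((b - 1)^2 + 8*a))) :
    ∀ N : ℕ,
      (∀ t ∈ Set.Icc (0:ℝ) R, 0 < (1 - t) * (1 - b*t) - a * t^2 * phiN a b N t) ∧
      MonotoneOn (phiN a b N) (Set.Icc (0:ℝ) R) ∧
      phiN a b N R = 1 := by
  set s0 := Real.sqrt ((b - 1)^2 + 8*a) with hs0
  have hs0nn : 0 ≤ s0 := Real.sqrt_nonneg _
  have hs0sq : s0^2 = (b - 1)^2 + 8*a := Real.sq_sqrt (by positivity)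
  have hs0pos : 0 < s0 := by nlinarith [sq_nonneg (b-1)]
  have hdpos : 0 < b + 1 + s0 := by linarith
  have hRpos : 0 < R := by rw [hR]; positivity
  have hE1 : R * (b + 1 + s0) = 2 := by
    rw [hR]; field_simp
  have hkeyR : R * s0 = 2 - (b+1)*R := by linarith [hE1]
  have hqR : (1 - R) * (1 - b*R) = 2*a*R^2 := by
    linear_combination (-(R*s0 + 2 - (b+1)*R)/4) * hkeyR + (R^2/4) * hs0sq
  have hRle : (b+1)*R ≤ 2 := by nlinarith [mul_nonneg hRpos.le hs0nn]
  have hRmem : R ∈ Set.Icc (0:ℝ) R := ⟨hRpos.le, le_refl R⟩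
  -- the key positivity fact
  have hq_at : ∀ t ∈ Set.Icc (0:ℝ) R, 0 < (1 - t) * (1 - b*t) - a * t^2 := by
    rintro t ⟨ht0, htR⟩
    have hbr : (b - 2*a) * (t + R) < b + 1 := by
      rcases le_or_gt b (2*a) with h | h
      · nlinarith
      · have h2R : (b - 2*a) * (t + R) ≤ (b - 2*a) * (2*R) := by nlinarith
        have : (b - 2*a) * (2*R) * (b + 1 + s0) < (b+1) * (b + 1 + s0) := by
          nlinarith [sq_nonneg (b-1), mul_pos (sub_pos.2 h) hs0pos]
        nlinarith
    have hident : (1 - t) * (1 - b*t) - a*t^2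
        = (R - t)*((b+1) - (b - 2*a)*(t + R)) + a*t^2 := by
      linear_combination hqR
    have hP : 0 ≤ (R - t)*((b+1) - (b - 2*a)*(t + R)) :=
      mul_nonneg (sub_nonneg.2 htR) (le_of_lt (sub_pos.2 hbr))
    rcases eq_or_lt_of_le ht0 with h0 | h0
    · rw [← h0]; norm_num
    · have : 0 < a * t^2 := by positivity
      linarith [hident.ge, hident.le]
  -- strengthened induction
  have main : ∀ N : ℕ,
      (∀ t ∈ Set.Icc (0:ℝ) R, 0 ≤ phiN a b N t) ∧
      (∀ t ∈ Set.Icc (0:ℝ) R, 0 < (1 - t) * (1 - b*t) - a * t^2 * phiN a b N t) ∧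
      MonotoneOn (phiN a b N) (Set.Icc (0:ℝ) R) ∧
      phiN a b N R = 1 := by
    intro N
    induction N with
    | zero =>
      refine ⟨fun t ht => by simp [phiN], fun t ht => ?_, fun s hs t ht hst => le_refl _, rfl⟩
      simpa [phiN] using hq_at t ht
    | succ N ih =>
      obtain ⟨hnn, hpos, hmono, hval⟩ := ih
      have hle1 : ∀ t ∈ Set.Icc (0:ℝ) R, phiN a b N t ≤ 1 := by
        intro t ht
        calc phiN a b N t ≤ phiN a b N R := hmono ht hRmem ht.2
        _ = 1 := hval
      have hq_pos : ∀ t ∈ Set.Icc (0:ℝ) R, 0 < (1 - t) * (1 - b*t) := by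
        intro t ht
        have h1 := hpos t ht
        have h2 : 0 ≤ a * t^2 * phiN a b N t :=
          mul_nonneg (mul_nonneg ha.le (sq_nonneg t)) (hnn t ht)
        linarith
      have hnn' : ∀ t ∈ Set.Icc (0:ℝ) R, 0 ≤ phiN a b (N+1) t := by
        intro t ht
        simp only [phiN]
        exact div_nonneg (mul_nonneg (mul_nonneg ha.le (sq_nonneg t)) (hnn t ht))
          (hpos t ht).le
      have hval' : phiN a b (N+1) R = 1 := by
        simp only [phiN]
        rw [hval, hqR, mul_one]
        have h5 : 2*a*R^2 - a*R^2 = a*R^2 := by ring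
        rw [h5]
        exact div_self (by positivity)
      have hmono' : MonotoneOn (phiN a b (N+1)) (Set.Icc (0:ℝ) R) := by
        intro s hs t ht hst
        have hφ : phiN a b N s ≤ phiN a b N t := hmono hs ht hst
        have hφs : 0 ≤ phiN a b N s := hnn s hs
        have hφt : 0 ≤ phiN a b N t := le_trans hφs hφ
        have hqt : 0 < (1 - t) * (1 - b*t) := hq_pos t ht
        have hDs := hpos s hs
        have hDt := hpos t ht
        simp only [phiN]
        rw [div_le_div_iff₀ hDs hDt]
        have hkey := phiN_key_st b s t R hb hs.1 hst ht.2 hRle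
        have hk : a*s^2*((1 - t) * (1 - b*t)) ≤ a*t^2*((1 - s) * (1 - b*s)) := by
          have := mul_le_mul_of_nonneg_left hkey ha.le
          linarith [this, (by ring : a * (s^2 * ((1 - t) * (1 - b*t))) = a*s^2*((1 - t) * (1 - b*t))),
            (by ring : a * (t^2 * ((1 - s) * (1 - b*s))) = a*t^2*((1 - s) * (1 - b*s)))]
        exact phiN_aux_mono (phiN a b N s) (phiN a b N t) (a*s^2) (a*t^2) _ _
          hφs hφ hφt (by positivity) hqt.le hk
      refine ⟨hnn', ?_, hmono', hval'⟩
      intro t ht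
      have hle1' : phiN a b (N+1) t ≤ 1 := by
        calc phiN a b (N+1) t ≤ phiN a b (N+1) R := hmono' ht hRmem ht.2
        _ = 1 := hval'
      have h2 : a * t^2 * phiN a b (N+1) t ≤ a * t^2 := by
        nlinarith [mul_nonneg ha.le (sq_nonneg t), hnn' t ht]
      have := hq_at t ht
      linarith
  intro N
  exact ⟨(main N).2.1, (main N).2.2⟩
end

section
/- With a > 0, b ≥ 1, R = 2/(b + 1 + √((b-1)² + 8a)), and φ_N defined by φ₀(t) = 1, φ_{N+1}(t) = a t² φ_N(t)/((1-t)(1-bt) - a t² φ_N(t)), each φ_N is quasi-homogeneous of degree 2N on [0,R], i.e., φ_N(λt) ≤ λ^{2N} φ_N(t) for all λ ∈ [0,1], t ∈ [0,R]. -/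
lemma key_ineq {a b R : ℝ} (ha : 0 < a) (hb : 1 ≤ b)
    (hR : R = 2 / (b + 1 + Real.sqrt ((b - 1)^2 + 8*a)))
    {t : ℝ} (ht0 : 0 ≤ t) (htR : t ≤ R) :
    2*a*t^2 ≤ (1-t)*(1-b*t) := by
  set s := Real.sqrt ((b-1)^2+8*a) with hs
  have hs0 : 0 ≤ s := Real.sqrt_nonneg _
  have hs2 : s^2 = (b-1)^2+8*a := Real.sq_sqrt (by nlinarith)
  have hden : 0 < b+1+s := by nlinarith
  have hR2 : R*(b+1+s) = 2 := by rw [hR]; field_simp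
  have h3 : R*s = 2 - R*(b+1) := by nlinarith [hR2]
  have h4 : (R*s)^2 = (2-R*(b+1))^2 := by rw [h3]
  have hqR : (b-2*a)*R^2 - (b+1)*R + 1 = 0 := by
    linear_combination (-(1:ℝ)/4)*h4 + (R^2/4)*hs2
  have h5 : (b-2*a)*(2*R)*(b+1+s) = (b+1-s)*(b+1+s) := by
    linear_combination (2*(b-2*a))*hR2 + hs2
  have h5' : (b-2*a)*(2*R) = b+1-s := mul_right_cancel₀ (ne_of_gt hden) h5
  have hfac : 0 ≤ (b+1) - (b-2*a)*(t+R) := by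
    rcases le_or_gt (b-2*a) 0 with h | h
    · nlinarith [mul_nonpos_of_nonpos_of_nonneg h (by linarith : (0:ℝ) ≤ t+R)]
    · nlinarith [mul_nonneg h.le (sub_nonneg.2 htR)]
  nlinarith [mul_nonneg (sub_nonneg.2 htR) hfac, hqR]

lemma bt_lt_one {a b R : ℝ} (ha : 0 < a) (hb : 1 ≤ b)
    (hR : R = 2 / (b + 1 + Real.sqrt ((b - 1)^2 + 8*a)))
    {t : ℝ} (ht0 : 0 ≤ t) (htR : t ≤ R) : b*t < 1 := by
  set s := Real.sqrt ((b-1)^2+8*a) with hs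
  have hs0 : 0 ≤ s := Real.sqrt_nonneg _
  have hs2 : s^2 = (b-1)^2+8*a := Real.sq_sqrt (by nlinarith)
  have hden : 0 < b+1+s := by nlinarith
  have hR2 : R*(b+1+s) = 2 := by rw [hR]; field_simp
  have hsb : b-1 < s := by nlinarith
  nlinarith [mul_le_mul_of_nonneg_left htR (by linarith : (0:ℝ) ≤ b)]

lemma phiN_bounds {a b R : ℝ} (ha : 0 < a) (hb : 1 ≤ b)
    (hR : R = 2 / (b + 1 + Real.sqrt ((b - 1)^2 + 8*a))) (N : ℕ) :
    ∀ t, 0 ≤ t → t ≤ R → 0 ≤ phiN a b N t ∧ phiN a b N t ≤ 1 := by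
  induction N with
  | zero => intro t _ _; simp [phiN]
  | succ N ih =>
    intro t ht0 htR
    obtain ⟨h0, h1⟩ := ih t ht0 htR
    have hkey := key_ineq ha hb hR ht0 htR
    have hbt : b*t < 1 := bt_lt_one ha hb hR ht0 htR
    have ht1 : t < 1 := by nlinarith
    have hat2 : 0 ≤ a*t^2 := by positivity
    have hDpos : 0 < (1-t)*(1-b*t) - a*t^2*phiN a b N t := by
      nlinarith [mul_pos (by linarith : (0:ℝ) < 1-t) (by linarith : (0:ℝ) < 1-b*t),
        mul_nonneg hat2 (sub_nonneg.2 h1)]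
    constructor
    · show 0 ≤ _ / _
      exact div_nonneg (by positivity) hDpos.le
    · show _ / _ ≤ (1:ℝ)
      rw [div_le_one hDpos]
      nlinarith [mul_nonneg hat2 (sub_nonneg.2 h1), mul_nonneg hat2 h0]

lemma Dpos {a b R : ℝ} (ha : 0 < a) (hb : 1 ≤ b)
    (hR : R = 2 / (b + 1 + Real.sqrt ((b - 1)^2 + 8*a))) (N : ℕ)
    {t : ℝ} (ht0 : 0 ≤ t) (htR : t ≤ R) :
    0 < (1-t)*(1-b*t) - a*t^2*phiN a b N t := by
  obtain ⟨h0, h1⟩ := phiN_bounds ha hb hR N t ht0 htR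
  have hkey := key_ineq ha hb hR ht0 htR
  have hbt : b*t < 1 := bt_lt_one ha hb hR ht0 htR
  have ht1 : t < 1 := by nlinarith
  have hat2 : 0 ≤ a*t^2 := by positivity
  nlinarith [mul_pos (by linarith : (0:ℝ) < 1-t) (by linarith : (0:ℝ) < 1-b*t),
    mul_nonneg hat2 (sub_nonneg.2 h1)]

theorem phiN_quasi_homogeneous (a b : ℝ) (ha : 0 < a) (hb : 1 ≤ b)
    (R : ℝ) (hR : R = 2 / (b + 1 + Real.sqrt ((b - 1)^2 + 8*a))) :
    ∀ N : ℕ, ∀ lam ∈ Set.Icc (0:ℝ) 1, ∀ t ∈ Set.Icc (0:ℝ) R,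
      phiN a b N (lam * t) ≤ lam ^ (2*N) * phiN a b N t := by
  intro N
  induction N with
  | zero => intro lam _ t _; simp [phiN]
  | succ N ih =>
    rintro lam ⟨hl0, hl1⟩ t ⟨ht0, htR⟩
    have hlt0 : 0 ≤ lam*t := mul_nonneg hl0 ht0
    have hltt : lam*t ≤ t := mul_le_of_le_one_left ht0 hl1
    have hltR : lam*t ≤ R := hltt.trans htR
    have ihlt := ih lam ⟨hl0, hl1⟩ t ⟨ht0, htR⟩
    obtain ⟨hp0, hp1⟩ := phiN_bounds ha hb hR N t ht0 htR
    obtain ⟨hq0, hq1⟩ := phiN_bounds ha hb hR N (lam*t) hlt0 hltR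
    have hDt := Dpos ha hb hR N ht0 htR
    have hDlt := Dpos ha hb hR N hlt0 hltR
    have hbt : b*t < 1 := bt_lt_one ha hb hR ht0 htR
    have ht1 : t < 1 := by nlinarith
    have hpow : lam^(2*N+2) ≤ 1 := pow_le_one₀ hl0 hl1
    have hpnn : (0:ℝ) ≤ lam^(2*N) := by positivity
    show a * (lam*t)^2 * phiN a b N (lam*t) /
        ((1 - lam*t) * (1 - b*(lam*t)) - a * (lam*t)^2 * phiN a b N (lam*t))
      ≤ lam^(2*(N+1)) * (a * t^2 * phiN a b N t /
        ((1 - t) * (1 - b*t) - a * t^2 * phiN a b N t))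
    have hnum : a * (lam*t)^2 * phiN a b N (lam*t) ≤ lam^(2*(N+1)) * (a * t^2 * phiN a b N t) := by
      calc a * (lam*t)^2 * phiN a b N (lam*t)
          = (a*lam^2*t^2) * phiN a b N (lam*t) := by ring
        _ ≤ (a*lam^2*t^2) * (lam^(2*N) * phiN a b N t) := by
            apply mul_le_mul_of_nonneg_left ihlt (by positivity)
        _ = lam^(2*(N+1)) * (a * t^2 * phiN a b N t) := by ring
    have hnum2 : a * (lam*t)^2 * phiN a b N (lam*t) ≤ a * t^2 * phiN a b N t := by
      have h2 : lam^(2*(N+1)) * (a * t^2 * phiN a b N t) ≤ a * t^2 * phiN a b N t := by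
        have : lam^(2*(N+1)) * (a * t^2 * phiN a b N t) ≤ 1 * (a * t^2 * phiN a b N t) := by
          apply mul_le_mul_of_nonneg_right _ (by positivity)
          calc lam^(2*(N+1)) = lam^(2*N+2) := by ring
            _ ≤ 1 := hpow
        linarith
      linarith [hnum]
    have hDmono : (1 - t) * (1 - b*t) - a * t^2 * phiN a b N t
        ≤ (1 - lam*t) * (1 - b*(lam*t)) - a * (lam*t)^2 * phiN a b N (lam*t) := by
      have e1 : (1-t)*(1-b*t) ≤ (1-lam*t)*(1-b*(lam*t)) := by
        apply mul_le_mul (by linarith) _ (by linarith) (by linarith)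
        nlinarith [mul_le_mul_of_nonneg_left hltt (by linarith : (0:ℝ) ≤ b)]
      linarith [hnum2]
    calc a * (lam*t)^2 * phiN a b N (lam*t) /
          ((1 - lam*t) * (1 - b*(lam*t)) - a * (lam*t)^2 * phiN a b N (lam*t))
        ≤ lam^(2*(N+1)) * (a * t^2 * phiN a b N t) /
          ((1 - t) * (1 - b*t) - a * t^2 * phiN a b N t) := by
          apply div_le_div₀ (by positivity) hnum hDt hDmono
      _ = lam^(2*(N+1)) * (a * t^2 * phiN a b N t /
          ((1 - t) * (1 - b*t) - a * t^2 * phiN a b N t)) := by ring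
end

section
/- With a > 0, b ≥ 1, R = 2/(b + 1 + √((b-1)² + 8a)), and φ_N as above, the function φ_N(t)·t maps [0,R] into [0,R] and is a gauge function of order 2N+1 on [0,R]: it is quasi-homogeneous of degree 2N+1 and satisfies t·φ_N(t) ≤ t on [0,R], with strict inequality on (0,R) when N ≥ 1. -/
lemma quad_facts {a b R : ℝ} (ha : 0 < a) (hb : 1 ≤ b)
    (hR : R = 2 / (b + 1 + Real.sqrt ((b - 1)^2 + 8*a))) :
    (b - 2*a)*R^2 - (b+1)*R + 1 = 0 ∧ 0 < R ∧ b*R < 1 ∧ (b+1)*R < 2 := by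
  set s := Real.sqrt ((b-1)^2+8*a) with hs
  have hs2 : s^2 = (b-1)^2 + 8*a := Real.sq_sqrt (by positivity)
  have hsnn : 0 ≤ s := Real.sqrt_nonneg _
  have hsgt : b - 1 < s := by nlinarith
  have hden : 0 < b + 1 + s := by nlinarith
  have hRpos : 0 < R := by rw [hR]; positivity
  refine ⟨?_, hRpos, ?_, ?_⟩
  · rw [hR]; field_simp; nlinarith [hs2]
  · rw [hR, ← mul_div_assoc, div_lt_iff₀ hden]; nlinarith
  · rw [hR, ← mul_div_assoc, div_lt_iff₀ hden]; nlinarith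

-- g(t) = (1-t)(1-bt) - 2at^2 ≥ 0 on [0,R], > 0 on [0,R)
lemma g_pos {a b R : ℝ} (ha : 0 < a) (hb : 1 ≤ b)
    (hquad : (b - 2*a)*R^2 - (b+1)*R + 1 = 0) (hRpos : 0 < R) (h2 : (b+1)*R < 2)
    {t : ℝ} (ht0 : 0 ≤ t) (htR : t ≤ R) :
    2*a*t^2 ≤ (1-t)*(1-b*t) ∧ (t < R → 2*a*t^2 < (1-t)*(1-b*t)) := by
  have hfac : 0 < 1 - (b-2*a)*R*t := by
    rcases le_or_gt (b - 2*a) 0 with h | h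
    · nlinarith [mul_nonneg (mul_nonneg hRpos.le ht0) (neg_nonneg.mpr h)]
    · have h1 : (b-2*a)*R*t ≤ (b-2*a)*R*R := by
        have := mul_le_mul_of_nonneg_left htR (mul_nonneg h.le hRpos.le)
        linarith [this]
      nlinarith
  have hkey : R * ((1-t)*(1-b*t) - 2*a*t^2) = (R - t) * (1 - (b-2*a)*R*t) := by
    linear_combination t * hquad
  constructor
  · nlinarith
  · intro hlt; nlinarith

lemma main_ind {a b R : ℝ} (ha : 0 < a) (hb : 1 ≤ b)
    (hR : R = 2 / (b + 1 + Real.sqrt ((b - 1)^2 + 8*a))) (N : ℕ) :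
    (∀ t ∈ Set.Icc (0:ℝ) R, 0 ≤ phiN a b N t ∧ phiN a b N t ≤ 1) ∧
    (∀ lam ∈ Set.Icc (0:ℝ) 1, ∀ t ∈ Set.Icc (0:ℝ) R,
       phiN a b N (lam*t) ≤ lam^(2*N) * phiN a b N t) ∧
    (1 ≤ N → ∀ t ∈ Set.Ioo (0:ℝ) R, phiN a b N t < 1) := by
  obtain ⟨hquad, hRpos, hbR, h2⟩ := quad_facts ha hb hR
  have hR1 : R < 1 := by nlinarith
  induction N with
  | zero =>
    refine ⟨fun t ht => by simp [phiN], fun lam hlam t ht => by simp [phiN], by omega⟩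
  | succ N IH =>
    obtain ⟨IH1, IH2, _⟩ := IH
    -- basic facts for t in [0,R]
    have hfacts : ∀ t ∈ Set.Icc (0:ℝ) R,
        0 < (1-t)*(1-b*t) ∧ 2*a*t^2 ≤ (1-t)*(1-b*t) ∧
        0 < (1 - t) * (1 - b*t) - a * t^2 * phiN a b N t := by
      rintro t ⟨ht0, htR⟩
      have h1t : 0 < 1 - t := by linarith
      have hbt : b * t ≤ b * R := mul_le_mul_of_nonneg_left htR (by linarith)
      have h1bt : 0 < 1 - b*t := by linarith
      have hP : 0 < (1-t)*(1-b*t) := mul_pos h1t h1bt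
      have hg := (g_pos ha hb hquad hRpos h2 ht0 htR).1
      obtain ⟨hphi0, hphi1⟩ := IH1 t ⟨ht0, htR⟩
      have hnum : a * t^2 * phiN a b N t ≤ a * t^2 * 1 :=
        mul_le_mul_of_nonneg_left hphi1 (by positivity)
      refine ⟨hP, hg, by nlinarith⟩
    refine ⟨?_, ?_, ?_⟩
    · rintro t ht
      obtain ⟨hP, hg, hD⟩ := hfacts t ht
      obtain ⟨ht0, htR⟩ := ht
      obtain ⟨hphi0, hphi1⟩ := IH1 t ⟨ht0, htR⟩
      have hnum : 0 ≤ a * t^2 * phiN a b N t := by positivity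
      constructor
      · show 0 ≤ a * t^2 * phiN a b N t / ((1 - t) * (1 - b*t) - a * t^2 * phiN a b N t)
        exact div_nonneg hnum hD.le
      · show a * t^2 * phiN a b N t / ((1 - t) * (1 - b*t) - a * t^2 * phiN a b N t) ≤ 1
        rw [div_le_one hD]
        nlinarith [sq_nonneg t]
    · rintro lam ⟨hl0, hl1⟩ t ⟨ht0, htR⟩
      have hu0 : 0 ≤ lam * t := mul_nonneg hl0 ht0
      have hut : lam * t ≤ t := by nlinarith
      have huR : lam * t ≤ R := le_trans hut htR
      obtain ⟨hPu, hgu, hDu⟩ := hfacts (lam*t) ⟨hu0, huR⟩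
      obtain ⟨hPt, hgt, hDt⟩ := hfacts t ⟨ht0, htR⟩
      obtain ⟨hphi0u, hphi1u⟩ := IH1 (lam*t) ⟨hu0, huR⟩
      obtain ⟨hphi0t, hphi1t⟩ := IH1 t ⟨ht0, htR⟩
      have hlpow : lam^(2*N) ≤ 1 := pow_le_one₀ hl0 hl1
      have hIH := IH2 lam ⟨hl0, hl1⟩ t ⟨ht0, htR⟩
      -- numerator bound
      have hnum : a * (lam*t)^2 * phiN a b N (lam*t)
          ≤ lam^(2*N+2) * (a * t^2 * phiN a b N t) := by
        have h1 : a * (lam*t)^2 * phiN a b N (lam*t) ≤ a * (lam*t)^2 * (lam^(2*N) * phiN a b N t) :=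
          mul_le_mul_of_nonneg_left hIH (by positivity)
        calc a * (lam*t)^2 * phiN a b N (lam*t)
            ≤ a * (lam*t)^2 * (lam^(2*N) * phiN a b N t) := h1
          _ = lam^(2*N+2) * (a * t^2 * phiN a b N t) := by ring
      -- denominator bound
      have hden : (1 - t) * (1 - b*t) - a * t^2 * phiN a b N t
          ≤ (1 - (lam*t)) * (1 - b*(lam*t)) - a * (lam*t)^2 * phiN a b N (lam*t) := by
        have hPmono : (1 - t) * (1 - b*t) ≤ (1 - lam*t) * (1 - b*(lam*t)) := by
          have hbt : b * (lam*t) ≤ b * t := mul_le_mul_of_nonneg_left hut (by linarith)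
          have h1t : (0:ℝ) ≤ 1 - t := by linarith
          have h1bt : (0:ℝ) ≤ 1 - b*t := by nlinarith [hPt]
          apply mul_le_mul (by linarith) (by linarith) h1bt (by linarith)
        have hnum2 : a * (lam*t)^2 * phiN a b N (lam*t) ≤ a * t^2 * phiN a b N t := by
          have : lam^(2*N+2) * (a * t^2 * phiN a b N t) ≤ 1 * (a * t^2 * phiN a b N t) :=
            mul_le_mul_of_nonneg_right (pow_le_one₀ hl0 hl1) (by positivity)
          linarith [hnum]
        linarith
      show a * (lam*t)^2 * phiN a b N (lam*t) / ((1 - lam*t) * (1 - b*(lam*t)) - a * (lam*t)^2 * phiN a b N (lam*t))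
          ≤ lam^(2*(N+1)) * (a * t^2 * phiN a b N t / ((1 - t) * (1 - b*t) - a * t^2 * phiN a b N t))
      refine le_trans (div_le_div₀ (by positivity) hnum hDt hden) (le_of_eq ?_)
      rw [show 2*(N+1) = 2*N+2 from by ring]; ring
    · intro _ t ⟨ht0, htR⟩
      obtain ⟨hP, hg, hD⟩ := hfacts t ⟨ht0.le, htR.le⟩
      obtain ⟨hphi0, hphi1⟩ := IH1 t ⟨ht0.le, htR.le⟩
      have hgs := (g_pos ha hb hquad hRpos h2 ht0.le htR.le).2 htR
      show a * t^2 * phiN a b N t / ((1 - t) * (1 - b*t) - a * t^2 * phiN a b N t) < 1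
      rw [div_lt_one hD]
      have hnum : a * t^2 * phiN a b N t ≤ a * t^2 * 1 :=
        mul_le_mul_of_nonneg_left hphi1 (by positivity)
      nlinarith

theorem varphiN_gauge_function (a b : ℝ) (ha : 0 < a) (hb : 1 ≤ b)
    (R : ℝ) (hR : R = 2 / (b + 1 + Real.sqrt ((b - 1)^2 + 8*a))) :
    ∀ N : ℕ,
      (∀ t ∈ Set.Icc (0:ℝ) R, t * phiN a b N t ∈ Set.Icc (0:ℝ) R) ∧
      (∀ lam ∈ Set.Icc (0:ℝ) 1, ∀ t ∈ Set.Icc (0:ℝ) R,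
        (lam * t) * phiN a b N (lam * t) ≤ lam ^ (2*N + 1) * (t * phiN a b N t)) ∧
      (∀ t ∈ Set.Icc (0:ℝ) R, t * phiN a b N t ≤ t) ∧
      (1 ≤ N → ∀ t ∈ Set.Ioo (0:ℝ) R, t * phiN a b N t < t) := by
  intro N
  obtain ⟨H1, H2, H3⟩ := main_ind ha hb hR N
  refine ⟨?_, ?_, ?_, ?_⟩
  · rintro t ⟨ht0, htR⟩
    obtain ⟨hphi0, hphi1⟩ := H1 t ⟨ht0, htR⟩
    exact ⟨mul_nonneg ht0 hphi0, le_trans (by nlinarith) htR⟩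
  · rintro lam ⟨hl0, hl1⟩ t ⟨ht0, htR⟩
    have h := H2 lam ⟨hl0, hl1⟩ t ⟨ht0, htR⟩
    calc (lam * t) * phiN a b N (lam * t)
        ≤ (lam * t) * (lam^(2*N) * phiN a b N t) :=
          mul_le_mul_of_nonneg_left h (mul_nonneg hl0 ht0)
      _ = lam ^ (2*N + 1) * (t * phiN a b N t) := by ring
  · rintro t ⟨ht0, htR⟩
    obtain ⟨hphi0, hphi1⟩ := H1 t ⟨ht0, htR⟩
    nlinarith
  · rintro hN t ⟨ht0, htR⟩
    have h := H3 hN t ⟨ht0, htR⟩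
    obtain ⟨hphi0, hphi1⟩ := H1 t ⟨ht0.le, htR.le⟩
    nlinarith
end

section
/- Let a > 0, R = 2/(3 + √(1+8a)), φ_N defined with b = 2 (φ₀ = 1, φ_{N+1}(t) = at²φ_N(t)/((1-t)(1-2t) - at²φ_N(t))), and for N ≥ 1 define β_N(t) = at²φ_{N-1}(t)/(1 - t - at²φ_{N-1}(t)) and ψ_N(t) = ((1-t)(1-2t) - at²φ_{N-1}(t))/(1 - t - at²φ_{N-1}(t)). Then β_N : [0,R] → [0,1) is well-defined and increasing, ψ_N : [0,R] → (0,1] is well-defined and decreasing, and ψ_N(t) = 1 - 2t(1 + β_N(t)) on [0,R]. -/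
/-!
Write `q(t) = a t² φ_N(t)`. Since `φ_N` is positive on `(0, R]`, nondecreasing and `φ_N(R) = 1`,
`q` is strictly increasing with `0 ≤ q(t) ≤ a t²`. This invariant survives the recursion: the
denominator `(1 - t)(1 - 2t) - q(t)` decreases and stays above `(1 - t)(1 - 2t) - a t² > 0`, and the
choice of `R`, i.e. `(1 - R)(1 - 2R) = 2aR²`, gives `φ_{N+1}(R) = aR² / (2aR² - aR²) = 1`.
Then `β_N = q / (1 - t - q)` lies in `[0, 1)` because `2 a t² < 1 - t`, it increases because its
numerator increases and its denominator decreases, and `ψ_N = 1 - 2t(1 + β_N)` decreases.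
-/

open Set

noncomputable def betaN (a : ℝ) (N : ℕ) (t : ℝ) : ℝ :=
  a * t^2 * phiN a 2 (N-1) t / (1 - t - a * t^2 * phiN a 2 (N-1) t)

noncomputable def psiN (a : ℝ) (N : ℕ) (t : ℝ) : ℝ :=
  ((1 - t) * (1 - 2*t) - a * t^2 * phiN a 2 (N-1) t) / (1 - t - a * t^2 * phiN a 2 (N-1) t)

structure IsCriticalRadius (a R : ℝ) : Prop where
  pos : 0 < R
  lt_half : R < 1 / 2
  eq : (1 - R) * (1 - 2 * R) = 2 * a * R ^ 2

/-- `1 / R` is the larger root of `x² - 3x + 2 - 2a`. -/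
theorem isCriticalRadius_of_eq {a R : ℝ} (ha : 0 < a) (hR : R = 2 / (3 + √(1 + 8 * a))) :
    IsCriticalRadius a R := by
  have hs0 : 0 ≤ √(1 + 8 * a) := Real.sqrt_nonneg _
  have hs2 : √(1 + 8 * a) ^ 2 = 1 + 8 * a := Real.sq_sqrt (by linarith)
  have hs1 : 1 < √(1 + 8 * a) := by nlinarith
  subst hR
  refine ⟨by positivity, ?_, ?_⟩
  · rw [div_lt_iff₀ (by positivity)]
    linarith
  · field_simp
    linear_combination hs2

namespace IsCriticalRadius

variable {a R t : ℝ}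

theorem two_mul_sq_lt (ha : 0 < a) (hR : IsCriticalRadius a R) (ht : t ∈ Icc 0 R) :
    2 * a * t ^ 2 < 1 - t :=
  calc 2 * a * t ^ 2 ≤ 2 * a * R ^ 2 := by gcongr; exacts [ht.1, ht.2]
    _ = (1 - R) * (1 - 2 * R) := hR.eq.symm
    _ < 1 - R := by nlinarith [hR.pos, hR.lt_half]
    _ ≤ 1 - t := by linarith [ht.2]

theorem mul_sq_lt (ha : 0 < a) (hR : IsCriticalRadius a R) (ht : t ∈ Icc 0 R) :
    a * t ^ 2 < (1 - t) * (1 - 2 * t) :=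
  calc a * t ^ 2 ≤ a * R ^ 2 := by gcongr; exacts [ht.1, ht.2]
    _ < 2 * a * R ^ 2 := by nlinarith [mul_pos ha (pow_pos hR.pos 2)]
    _ = (1 - R) * (1 - 2 * R) := hR.eq.symm
    _ ≤ (1 - t) * (1 - 2 * t) := by
      have := hR.lt_half
      gcongr <;> linarith [ht.2]

end IsCriticalRadius

structure NormalizedOn (R : ℝ) (f : ℝ → ℝ) : Prop where
  monotoneOn : MonotoneOn f (Icc 0 R)
  pos : ∀ t ∈ Ioc 0 R, 0 < f t
  eq_one : f R = 1

namespace NormalizedOn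

variable {a R t : ℝ} {f : ℝ → ℝ}

theorem le_one (hf : NormalizedOn R f) (ht : t ∈ Icc 0 R) : f t ≤ 1 :=
  hf.eq_one ▸ hf.monotoneOn ht ⟨ht.1.trans ht.2, le_rfl⟩ ht.2

theorem mul_sq_nonneg (hf : NormalizedOn R f) (ha : 0 ≤ a) (ht : t ∈ Icc 0 R) :
    0 ≤ a * t ^ 2 * f t := by
  rcases ht.1.eq_or_lt with rfl | ht0
  · simp
  · exact mul_nonneg (by positivity) (hf.pos t ⟨ht0, ht.2⟩).le

theorem mul_sq_le (hf : NormalizedOn R f) (ha : 0 ≤ a) (ht : t ∈ Icc 0 R) :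
    a * t ^ 2 * f t ≤ a * t ^ 2 :=
  mul_le_of_le_one_right (by positivity) (hf.le_one ht)

theorem strictMonoOn_mul_sq (hf : NormalizedOn R f) (ha : 0 < a) :
    StrictMonoOn (fun t ↦ a * t ^ 2 * f t) (Icc 0 R) := by
  intro t₁ ht₁ t₂ ht₂ ht
  have hsq : a * t₁ ^ 2 < a * t₂ ^ 2 := by gcongr; exact ht₁.1
  calc a * t₁ ^ 2 * f t₁ ≤ a * t₁ ^ 2 * f t₂ := by gcongr; exact hf.monotoneOn ht₁ ht₂ ht.le
    _ < a * t₂ ^ 2 * f t₂ := mul_lt_mul_of_pos_right hsq (hf.pos t₂ ⟨ht₁.1.trans_lt ht, ht₂.2⟩)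

theorem succ (hf : NormalizedOn R f) (ha : 0 < a) (hR : IsCriticalRadius a R) :
    NormalizedOn R fun t ↦ a * t ^ 2 * f t / ((1 - t) * (1 - 2 * t) - a * t ^ 2 * f t) := by
  have hden : ∀ t ∈ Icc 0 R, 0 < (1 - t) * (1 - 2 * t) - a * t ^ 2 * f t := fun t ht ↦ by
    linarith [hR.mul_sq_lt ha ht, hf.mul_sq_le ha.le ht]
  refine ⟨?_, fun t ht ↦ ?_, ?_⟩
  · intro t₁ ht₁ t₂ ht₂ ht
    have hq := (hf.strictMonoOn_mul_sq ha).monotoneOn ht₁ ht₂ ht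
    have hD : (1 - t₂) * (1 - 2 * t₂) ≤ (1 - t₁) * (1 - 2 * t₁) := by
      have := hR.lt_half
      gcongr <;> linarith [ht₂.2]
    exact div_le_div₀ (hf.mul_sq_nonneg ha.le ht₂) hq (hden t₂ ht₂) (by linarith)
  · exact div_pos (mul_pos (mul_pos ha (pow_pos ht.1 2)) (hf.pos t ht))
      (hden t (Ioc_subset_Icc_self ht))
  · show a * R ^ 2 * f R / ((1 - R) * (1 - 2 * R) - a * R ^ 2 * f R) = 1
    have haR : 0 < a * R ^ 2 := mul_pos ha (pow_pos hR.pos 2)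
    rw [hf.eq_one, hR.eq, div_eq_one_iff_eq (by linarith)]
    ring

end NormalizedOn

theorem normalizedOn_phiN {a R : ℝ} (ha : 0 < a) (hR : IsCriticalRadius a R) (N : ℕ) :
    NormalizedOn R (phiN a 2 N) := by
  induction N with
  | zero => exact ⟨monotoneOn_const, fun _ _ ↦ one_pos, rfl⟩
  | succ N ih => exact ih.succ ha hR

section

variable {a R t : ℝ} {N : ℕ}

theorem one_sub_sub_mul_sq_phiN_pos (ha : 0 < a) (hR : IsCriticalRadius a R) (ht : t ∈ Icc 0 R) :
    0 < 1 - t - a * t ^ 2 * phiN a 2 (N - 1) t := by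
  have hf := normalizedOn_phiN ha hR (N - 1)
  linarith [hR.two_mul_sq_lt ha ht, hf.mul_sq_le ha.le ht, hf.mul_sq_nonneg ha.le ht]

theorem betaN_mem_Ico (ha : 0 < a) (hR : IsCriticalRadius a R) (ht : t ∈ Icc 0 R) :
    betaN a N t ∈ Ico 0 1 := by
  have hf := normalizedOn_phiN ha hR (N - 1)
  have hden := one_sub_sub_mul_sq_phiN_pos (N := N) ha hR ht
  refine ⟨div_nonneg (hf.mul_sq_nonneg ha.le ht) hden.le, ?_⟩
  rw [betaN, div_lt_one hden]
  linarith [hR.two_mul_sq_lt ha ht, hf.mul_sq_le ha.le ht]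

theorem strictMonoOn_betaN (ha : 0 < a) (hR : IsCriticalRadius a R) :
    StrictMonoOn (betaN a N) (Icc 0 R) := by
  have hf := normalizedOn_phiN ha hR (N - 1)
  intro t₁ ht₁ t₂ ht₂ ht
  have hq := hf.strictMonoOn_mul_sq ha ht₁ ht₂ ht
  refine div_lt_div₀ hq ?_ (hf.mul_sq_nonneg ha.le ht₂) (one_sub_sub_mul_sq_phiN_pos ha hR ht₂)
  linarith

theorem psiN_eq (ha : 0 < a) (hR : IsCriticalRadius a R) (ht : t ∈ Icc 0 R) :
    psiN a N t = 1 - 2 * t * (1 + betaN a N t) := by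
  have hden := (one_sub_sub_mul_sq_phiN_pos (N := N) ha hR ht).ne'
  rw [psiN, betaN, div_eq_iff hden]
  linear_combination (2 * t) * div_mul_cancel₀ (a * t ^ 2 * phiN a 2 (N - 1) t) hden

theorem psiN_mem_Ioc (ha : 0 < a) (hR : IsCriticalRadius a R) (ht : t ∈ Icc 0 R) :
    psiN a N t ∈ Ioc 0 1 := by
  have hf := normalizedOn_phiN ha hR (N - 1)
  refine ⟨div_pos ?_ (one_sub_sub_mul_sq_phiN_pos ha hR ht), ?_⟩
  · linarith [hR.mul_sq_lt ha ht, hf.mul_sq_le ha.le ht]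
  · rw [psiN_eq ha hR ht]
    nlinarith [ht.1, (betaN_mem_Ico (N := N) ha hR ht).1]

theorem strictAntiOn_psiN (ha : 0 < a) (hR : IsCriticalRadius a R) :
    StrictAntiOn (psiN a N) (Icc 0 R) := by
  intro t₁ ht₁ t₂ ht₂ ht
  rw [psiN_eq ha hR ht₁, psiN_eq ha hR ht₂]
  have hβ := strictMonoOn_betaN (N := N) ha hR ht₁ ht₂ ht
  nlinarith [ht₁.1, (betaN_mem_Ico (N := N) ha hR ht₁).1]

end

theorem betaN_psiN_well_defined (a : ℝ) (ha : 0 < a)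
    (R : ℝ) (hR : R = 2 / (3 + Real.sqrt (1 + 8*a))) :
    ∀ N : ℕ, 1 ≤ N →
      (∀ t ∈ Set.Icc (0:ℝ) R, 0 < 1 - t - a * t^2 * phiN a 2 (N-1) t) ∧
      (∀ t ∈ Set.Icc (0:ℝ) R, betaN a N t ∈ Set.Ico (0:ℝ) 1) ∧
      StrictMonoOn (betaN a N) (Set.Icc (0:ℝ) R) ∧
      (∀ t ∈ Set.Icc (0:ℝ) R, psiN a N t ∈ Set.Ioc (0:ℝ) 1) ∧
      StrictAntiOn (psiN a N) (Set.Icc (0:ℝ) R) ∧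
      (∀ t ∈ Set.Icc (0:ℝ) R, psiN a N t = 1 - 2*t*(1 + betaN a N t)) := by
  have hR := isCriticalRadius_of_eq ha hR
  intro N _
  exact ⟨fun _ ↦ one_sub_sub_mul_sq_phiN_pos ha hR, fun _ ↦ betaN_mem_Ico ha hR,
    strictMonoOn_betaN ha hR, fun _ ↦ psiN_mem_Ioc ha hR, strictAntiOn_psiN ha hR,
    fun _ ↦ psiN_eq ha hR⟩
end

section
/- With a > 0, b = 2, R = 2/(3+√(1+8a)), and β_N, ψ_N, φ_N defined as above, for every N ≥ 1 and t ∈ [0,R]: β_N(t) = φ_N(t)·ψ_N(t), β_{N+1}(t) ≤ β_N(t), and ψ_{N+1}(t) ≥ ψ_N(t). -/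
lemma div_mul_div_cancel_of_le {G₀ : Type*} [GroupWithZero G₀] [PartialOrder G₀] {x y : G₀}
    (hx : 0 ≤ x) (hxy : x ≤ y) (z : G₀) : x / y * (y / z) = x / z := by
  rcases eq_or_ne y 0 with rfl | hy
  · simp [hxy.antisymm hx]
  · exact div_mul_div_cancel₀ hy

section OrderedField

variable {K : Type*} [Field K] [LinearOrder K] [IsStrictOrderedRing K] {u v D P : K}

lemma div_sub_le_div_sub (hu : 0 ≤ u) (huv : u ≤ v) (hv : v ≤ D - v) :
    u / (D - u) ≤ v / (D - v) := by
  rcases (hu.trans (huv.trans hv)).lt_or_eq' with hD | hD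
  · rw [div_le_div_iff₀ (by linarith) hD]
    nlinarith
  · have hv0 : v = 0 := by linarith
    have hu0 : u = 0 := by linarith
    simp [hu0, hv0]

lemma sub_div_sub_le_sub_div_sub (hPD : P ≤ D) (huv : u ≤ v) (hv : v < D) :
    (P - v) / (D - v) ≤ (P - u) / (D - u) := by
  rw [div_le_div_iff₀ (by linarith) (by linarith)]
  nlinarith

end OrderedField

lemma two_mul_sq_le_of_le_radius {a t : ℝ} (ha : 0 < a) (ht0 : 0 ≤ t)
    (htR : t ≤ 2 / (3 + √(1 + 8 * a))) : t < 1 / 2 ∧ 2 * (a * t ^ 2) ≤ (1 - t) * (1 - 2 * t) := by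
  set R := 2 / (3 + √(1 + 8 * a))
  set s := √(1 + 8 * a)
  have hs2 : s ^ 2 = 1 + 8 * a := Real.sq_sqrt (by positivity)
  have hs1 : 1 < s := by nlinarith [Real.sqrt_nonneg (1 + 8 * a)]
  have hR_lt : R < 1 / 2 := by
    rw [div_lt_iff₀ (by positivity)]
    linarith
  have hR_root : 2 * a * R ^ 2 = (1 - R) * (1 - 2 * R) := by
    have hRs : R * (3 + s) = 2 := div_mul_cancel₀ _ (by positivity)
    linear_combination (R * s + 2 - 3 * R) / 4 * hRs - R ^ 2 / 4 * hs2
  refine ⟨htR.trans_lt hR_lt, ?_⟩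
  nlinarith [mul_nonneg (sub_nonneg.2 htR) (show 0 ≤ 3 - 2 * R - 2 * t by linarith),
    mul_le_mul_of_nonneg_left (pow_le_pow_left₀ ht0 htR 2) ha.le]

section Phi

variable {a b t : ℝ} (hc : 0 ≤ a * t ^ 2) (hcP : 2 * (a * t ^ 2) ≤ (1 - t) * (1 - b * t))
include hc hcP

lemma phiN_mem_Icc (N : ℕ) : phiN a b N t ∈ Set.Icc 0 1 := by
  induction N with
  | zero => simp [phiN]
  | succ N ih =>
    have hx : 0 ≤ a * t ^ 2 * phiN a b N t := mul_nonneg hc ih.1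
    have hxP : a * t ^ 2 * phiN a b N t ≤ (1 - t) * (1 - b * t) - a * t ^ 2 * phiN a b N t := by
      nlinarith [mul_le_of_le_one_right hc ih.2]
    exact ⟨div_nonneg hx (hx.trans hxP), div_le_one_of_le₀ hxP (hx.trans hxP)⟩

lemma mul_phiN_le_sub (N : ℕ) :
    a * t ^ 2 * phiN a b N t ≤ (1 - t) * (1 - b * t) - a * t ^ 2 * phiN a b N t := by
  nlinarith [mul_le_of_le_one_right hc (phiN_mem_Icc hc hcP N).2]

lemma phiN_succ_le (N : ℕ) : phiN a b (N + 1) t ≤ phiN a b N t := by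
  induction N with
  | zero => exact (phiN_mem_Icc hc hcP 1).2
  | succ N ih =>
    exact div_sub_le_div_sub (mul_nonneg hc (phiN_mem_Icc hc hcP _).1)
      (mul_le_mul_of_nonneg_left ih hc) (mul_phiN_le_sub hc hcP N)

end Phi

section BetaPsi

variable {a t : ℝ} (hc : 0 ≤ a * t ^ 2) (hcP : 2 * (a * t ^ 2) ≤ (1 - t) * (1 - 2 * t))
include hc hcP

lemma mul_phiN_le_one_sub_sub (ht0 : 0 ≤ t) (ht1 : t ≤ 1) (N : ℕ) :
    a * t ^ 2 * phiN a 2 N t ≤ 1 - t - a * t ^ 2 * phiN a 2 N t := by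
  nlinarith [mul_phiN_le_sub hc hcP N]

lemma one_sub_sub_mul_phiN_pos (ht0 : 0 ≤ t) (ht1 : t < 1) (N : ℕ) :
    0 < 1 - t - a * t ^ 2 * phiN a 2 N t := by
  nlinarith [mul_le_of_le_one_right hc (phiN_mem_Icc hc hcP N).2]

lemma betaN_succ_eq_phiN_mul_psiN (N : ℕ) :
    betaN a (N + 1) t = phiN a 2 (N + 1) t * psiN a (N + 1) t := by
  simp only [betaN, psiN, phiN, Nat.add_sub_cancel]
  exact (div_mul_div_cancel_of_le (mul_nonneg hc (phiN_mem_Icc hc hcP N).1)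
    (mul_phiN_le_sub hc hcP N) _).symm

lemma betaN_succ_succ_le (ht0 : 0 ≤ t) (ht1 : t ≤ 1) (N : ℕ) :
    betaN a (N + 2) t ≤ betaN a (N + 1) t := by
  simp only [betaN, Nat.add_sub_cancel]
  exact div_sub_le_div_sub (mul_nonneg hc (phiN_mem_Icc hc hcP _).1)
    (mul_le_mul_of_nonneg_left (phiN_succ_le hc hcP N) hc)
    (mul_phiN_le_one_sub_sub hc hcP ht0 ht1 N)

lemma psiN_succ_le_psiN_succ_succ (ht0 : 0 ≤ t) (ht1 : t < 1) (N : ℕ) :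
    psiN a (N + 1) t ≤ psiN a (N + 2) t := by
  simp only [psiN, Nat.add_sub_cancel]
  exact sub_div_sub_le_sub_div_sub (by nlinarith)
    (mul_le_mul_of_nonneg_left (phiN_succ_le hc hcP N) hc)
    (sub_pos.1 (one_sub_sub_mul_phiN_pos hc hcP ht0 ht1 N))

end BetaPsi

theorem betaN_psiN_properties (a : ℝ) (ha : 0 < a)
    (R : ℝ) (hR : R = 2 / (3 + Real.sqrt (1 + 8*a))) :
    ∀ N : ℕ, 1 ≤ N → ∀ t ∈ Set.Icc (0:ℝ) R,
      betaN a N t = phiN a 2 N t * psiN a N t ∧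
      betaN a (N+1) t ≤ betaN a N t ∧
      psiN a N t ≤ psiN a (N+1) t := by
  rintro N hN t ⟨ht0, htR⟩
  obtain ⟨ht_half, hcP⟩ := two_mul_sq_le_of_le_radius ha ht0 (hR ▸ htR)
  have hc : 0 ≤ a * t ^ 2 := by positivity
  obtain ⟨M, rfl⟩ := Nat.exists_eq_add_of_le' hN
  exact ⟨betaN_succ_eq_phiN_mul_psiN hc hcP M,
    betaN_succ_succ_le hc hcP ht0 (by linarith) M,
    psiN_succ_le_psiN_succ_succ hc hcP ht0 (by linarith) M⟩
end

section
/- Let f ∈ ℂ[z] be monic of degree n ≥ 2 with root-vector ξ ∈ ℂⁿ (f(z) = ∏ᵢ (z - ξᵢ)), let x ∈ ℂⁿ and y ∈ ℂⁿ, and fix i with f(xᵢ) ≠ 0 and xᵢ ≠ yⱼ for all j ≠ i. Then f'(xᵢ)/f(xᵢ) - ∑_{j ≠ i} 1/(xᵢ - yⱼ) = (1 - σᵢ)/(xᵢ - ξᵢ), where σᵢ = (xᵢ - ξᵢ) ∑_{j ≠ i} (yⱼ - ξⱼ)/((xᵢ - ξⱼ)(xᵢ - yⱼ)). -/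
open Polynomial Finset

theorem roots_prod_univ_X_sub_C {R ι : Type*} [CommRing R] [IsDomain R] [Fintype ι] (ξ : ι → R) :
    (∏ j, (X - C (ξ j))).roots = univ.val.map ξ := by
  rw [prod_eq_multiset_prod]
  simpa only [Multiset.map_map, Function.comp_def] using roots_multiset_prod_X_sub_C (univ.val.map ξ)

theorem eval_derivative_div_eval_prod_X_sub_C {K ι : Type*} [Field K] [Fintype ι] (ξ : ι → K)
    {z : K} (hz : (∏ j, (X - C (ξ j))).eval z ≠ 0) :
    (derivative (∏ j, (X - C (ξ j)))).eval z / (∏ j, (X - C (ξ j))).eval z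
      = ∑ j, 1 / (z - ξ j) := by
  rw [(Splits.prod fun j _ => Splits.X_sub_C (ξ j)).eval_derivative_div_eval_of_ne_zero hz,
    roots_prod_univ_X_sub_C, Multiset.map_map]
  rfl

theorem one_div_sub_sub_one_div_sub {K : Type*} [Field K] {z a b : K} (ha : z - a ≠ 0)
    (hb : z - b ≠ 0) : 1 / (z - a) - 1 / (z - b) = -((b - a) / ((z - a) * (z - b))) := by
  field_simp
  ring

theorem ehrlich_identity_general (n : ℕ) (ξ x y : Fin n → ℂ)
    (f : Polynomial ℂ) (hf : f = ∏ j : Fin n, (X - C (ξ j)))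
    (i : Fin n) (hfx : f.eval (x i) ≠ 0)
    (hxy : ∀ j : Fin n, j ≠ i → x i ≠ y j) :
    f.derivative.eval (x i) / f.eval (x i) - ∑ j ∈ univ.erase i, 1 / (x i - y j)
      = (1 - (x i - ξ i) * ∑ j ∈ univ.erase i,
            (y j - ξ j) / ((x i - ξ j) * (x i - y j))) / (x i - ξ i) := by
  subst hf
  have hξ : ∀ j, x i - ξ j ≠ 0 := fun j => by
    rw [eval_prod, prod_ne_zero_iff] at hfx
    simpa using hfx j (mem_univ j)
  have hy : ∀ j ∈ univ.erase i, x i - y j ≠ 0 := fun j hj =>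
    sub_ne_zero.mpr (hxy j (ne_of_mem_erase hj))
  rw [eval_derivative_div_eval_prod_X_sub_C ξ hfx, ← add_sum_erase _ _ (mem_univ i), add_sub_assoc,
    ← sum_sub_distrib, sum_congr rfl fun j hj => one_div_sub_sub_one_div_sub (hξ j) (hy j hj),
    sum_neg_distrib, sub_div, mul_div_cancel_left₀ _ (hξ i), ← sub_eq_add_neg]

theorem ehrlich_identity (n : ℕ) (hn : 2 ≤ n) (ξ x y : Fin n → ℂ)
    (f : Polynomial ℂ) (hf : f = ∏ j : Fin n, (X - C (ξ j)))
    (i : Fin n) (hfx : f.eval (x i) ≠ 0)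
    (hxy : ∀ j : Fin n, j ≠ i → x i ≠ y j) :
    f.derivative.eval (x i) / f.eval (x i) - ∑ j ∈ univ.erase i, 1 / (x i - y j)
      = (1 - (x i - ξ i) * ∑ j ∈ univ.erase i,
            (y j - ξ j) / ((x i - ξ j) * (x i - y j))) / (x i - ξ i) :=
  ehrlich_identity_general n ξ x y f hf i hfx hxy
end
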